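/- arXiv:1902.06777 — 6 statements merged into one kernel-verified Lean document; each statement's English description precedes it below -/
import Mathlib

section
/- Let μ be a regular cardinal and λ a regular cardinal with λ > μ. In a category with μ-directed colimits, the colimit of a μ-directed system with at most θ objects, each λ-presentable, is (θ⁺ + λ)-presentable (where + denotes cardinal maximum). -/
open CategoryTheory Limits Cardinal

universe u v u₂ v₂

/-- A preorder is `μ`-directed if every subset of cardinality `< μ` has an upper bound. -/
def IsCardDirected (μ : Cardinal.{v}) (J : Type v) [Preorder J] : Prop :=
  ∀ S : Set J, #S < μ → ∃ b, ∀ s ∈ S, s ≤ b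

/-- An object is `μ`-presentable if its hom-functor preserves `μ`-directed colimits. -/
def IsPresentableObj (μ : Cardinal.{v}) {K : Type u} [Category.{v} K] (M : K) : Prop :=
  ∀ (J : Type v) (_ : Preorder J), IsCardDirected μ J →
    Nonempty (PreservesColimitsOfShape J (coyoneda.obj (Opposite.op M)))

/-- `(<λ)`-presentable: `θ`-presentable for some regular `θ < max(λ, ℵ₁)`. -/
def IsLtPresentableObj (lam : Cardinal.{v}) {K : Type u} [Category.{v} K] (M : K) : Prop :=
  ∃ θ : Cardinal.{v}, θ.IsRegular ∧ θ < max lam (Cardinal.aleph 1) ∧ IsPresentableObj θ M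

/-- `M` has presentability rank `lam`: the least regular cardinal at which `M` is presentable. -/
def HasPresRank (lam : Cardinal.{v}) {K : Type u} [Category.{v} K] (M : K) : Prop :=
  lam.IsRegular ∧ IsPresentableObj lam M ∧
    ∀ ν : Cardinal.{v}, ν.IsRegular → IsPresentableObj ν M → lam ≤ ν

/-- `K` has all `μ`-directed colimits. -/
def HasMuDirectedColimits (μ : Cardinal.{v}) (K : Type u) [Category.{v} K] : Prop :=
  ∀ (J : Type v) (_ : Preorder J), IsCardDirected μ J → HasColimitsOfShape J K

/-- `(μ, <λ)`-accessibility of a category `K`. -/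
def IsAccCat (μ lam : Cardinal.{v}) (K : Type u) [Category.{v} K] : Prop :=
  HasMuDirectedColimits μ K ∧
  (∃ S : Set K, Small.{v} S ∧ ∀ M : K, IsLtPresentableObj lam M → ∃ N ∈ S, Nonempty (M ≅ N)) ∧
  (∀ M : K, ∃ (J : Type v) (_ : Preorder J) (D : J ⥤ K) (c : Cocone D),
     IsCardDirected μ J ∧ (∀ j, IsLtPresentableObj lam (D.obj j)) ∧
     Nonempty (IsColimit c) ∧ c.pt = M)

/-- In a category with `μ`-directed colimits (`μ` regular), the colimit of a `μ`-directed
system with at most `θ` objects, each `λ`-presentable (`λ` regular, `λ > μ`), is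
`max(θ⁺, λ)`-presentable. -/
theorem stmt9 {K : Type u} [Category.{v} K] (μ lam θ : Cardinal.{v})
    (hμ : μ.IsRegular) (hlam : lam.IsRegular) (hμlam : μ < lam)
    (hK : HasMuDirectedColimits μ K)
    {J : Type v} [Preorder J] (hJ : IsCardDirected μ J) (hJθ : #J ≤ θ)
    (D : J ⥤ K) (hpres : ∀ j : J, IsPresentableObj lam (D.obj j))
    (c : Cocone D) (hc : IsColimit c) :
    IsPresentableObj (max (Order.succ θ) lam) c.pt := by
  have hθν : θ < max (Order.succ θ) lam :=
    lt_of_lt_of_le (Order.lt_succ θ) (le_max_left _ _)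
  have haleph : Cardinal.aleph0 ≤ max (Order.succ θ) lam :=
    hlam.aleph0_le.trans (le_max_right _ _)
  intro I instI hI
  letI : Preorder I := instI
  have hbound : ∀ (A : Type v) (f : A → I), #A < max (Order.succ θ) lam →
      ∃ b, ∀ a, f a ≤ b := by
    intro A f hA
    obtain ⟨b, hb⟩ := hI (Set.range f) (lt_of_le_of_lt Cardinal.mk_range_le hA)
    exact ⟨b, fun a => hb _ ⟨a, rfl⟩⟩
  have hne : Nonempty I := by
    obtain ⟨b, -⟩ := hI ∅ (by
      rw [Cardinal.mk_emptyCollection]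
      exact lt_of_lt_of_le Cardinal.aleph0_pos haleph)
    exact ⟨b⟩
  have hdir : IsDirected I (· ≤ ·) := ⟨fun a b => by
    obtain ⟨c', hc'⟩ := hI {a, b}
      (lt_of_lt_of_le ((Set.finite_singleton b).insert a).lt_aleph0 haleph)
    exact ⟨c', hc' a (by simp), hc' b (by simp)⟩⟩
  haveI := hne
  haveI := hdir
  have hIlam : IsCardDirected lam I := fun S hS =>
    hI S (hS.trans_le (le_max_right _ _))
  refine ⟨⟨fun {E} => ⟨fun {d} hd => ⟨?_⟩⟩⟩⟩
  haveI : ∀ j : J, PreservesColimitsOfShape I (coyoneda.obj (Opposite.op (D.obj j))) :=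
    fun j => (hpres j I instI hIlam).some
  have hdj : ∀ j : J, IsColimit ((coyoneda.obj (Opposite.op (D.obj j))).mapCocone d) :=
    fun j => isColimitOfPreserves _ hd
  -- equality detection for maps out of the λ-presentable D.obj j
  have keyEq : ∀ (j : J) (i i' : I) (u : D.obj j ⟶ E.obj i) (v : D.obj j ⟶ E.obj i'),
      u ≫ d.ι.app i = v ≫ d.ι.app i' →
      ∃ (k : I) (h1 : i ≤ k) (h2 : i' ≤ k),
        u ≫ E.map (homOfLE h1) = v ≫ E.map (homOfLE h2) := by
    intro j i i' u v huv
    obtain ⟨k, f, g, hfg⟩ :=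
      (Types.FilteredColimit.isColimit_eq_iff
        (E ⋙ coyoneda.obj (Opposite.op (D.obj j))) (hdj j)
        (i := i) (j := i') (xi := u) (xj := v)).mp huv
    refine ⟨k, leOfHom f, leOfHom g, ?_⟩
    have hf : homOfLE (leOfHom f) = f := Subsingleton.elim _ _
    have hg : homOfLE (leOfHom g) = g := Subsingleton.elim _ _
    rw [hf, hg]
    exact hfg
  have keySur : ∀ (j : J) (w : D.obj j ⟶ d.pt),
      ∃ (i : I) (u : D.obj j ⟶ E.obj i), u ≫ d.ι.app i = w := by
    intro j w
    obtain ⟨i, u, hu⟩ := Types.jointly_surjective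
      (E ⋙ coyoneda.obj (Opposite.op (D.obj j))) (hdj j) w
    exact ⟨i, u, hu⟩
  refine Types.FilteredColimit.isColimitOf _ _ ?_ ?_
  · -- joint surjectivity
    intro f
    choose ij uj huj using fun j => keySur j (c.ι.app j ≫ f)
    obtain ⟨i₀, hi₀⟩ := hbound J ij (hJθ.trans_lt hθν)
    let w : ∀ j, D.obj j ⟶ E.obj i₀ := fun j => uj j ≫ E.map (homOfLE (hi₀ j))
    have hwd : ∀ j, w j ≫ d.ι.app i₀ = c.ι.app j ≫ f := by
      intro j
      show (uj j ≫ E.map (homOfLE (hi₀ j))) ≫ d.ι.app i₀ = _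
      rw [Category.assoc, d.w (homOfLE (hi₀ j))]
      exact huj j
    have hpair : ∀ p : J × J, ∃ (k : I) (hk : i₀ ≤ k),
        ∀ (hle : p.1 ≤ p.2),
          D.map (homOfLE hle) ≫ w p.2 ≫ E.map (homOfLE hk) = w p.1 ≫ E.map (homOfLE hk) := by
      rintro ⟨j, j'⟩
      by_cases hle : j ≤ j'
      · have h0 : (D.map (homOfLE hle) ≫ w j') ≫ d.ι.app i₀ = w j ≫ d.ι.app i₀ := by
          rw [Category.assoc, hwd j', ← Category.assoc, c.w (homOfLE hle), ← hwd j]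
        obtain ⟨k, h1, h2, hk⟩ := keyEq j i₀ i₀ _ _ h0
        refine ⟨k, h1, fun _ => ?_⟩
        simp only [Category.assoc] at hk
        exact hk
      · exact ⟨i₀, le_refl i₀, fun h => absurd h hle⟩
    choose kp hkp hkeq using hpair
    obtain ⟨b, hb⟩ := hbound (J × J) kp (by
      rw [Cardinal.mk_prod, Cardinal.lift_id]
      exact Cardinal.mul_lt_of_lt haleph (hJθ.trans_lt hθν) (hJθ.trans_lt hθν))
    obtain ⟨i₁, hbi₁, hi₀i₁⟩ := directed_of (· ≤ ·) b i₀
    have hnat : ∀ (j j' : J) (hle : j ≤ j'),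
        D.map (homOfLE hle) ≫ w j' ≫ E.map (homOfLE hi₀i₁) =
          w j ≫ E.map (homOfLE hi₀i₁) := by
      intro j j' hle
      have hkm : kp (j, j') ≤ i₁ := (hb (j, j')).trans hbi₁
      have e : (homOfLE hi₀i₁ : i₀ ⟶ i₁) = homOfLE (hkp (j, j')) ≫ homOfLE hkm :=
        Subsingleton.elim _ _
      rw [e, E.map_comp]
      have h := congrArg (fun t => t ≫ E.map (homOfLE hkm)) (hkeq (j, j') hle)
      dsimp at h
      simp only [Category.assoc] at h ⊢
      exact h
    let s : Cocone D :=
      { pt := E.obj i₁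
        ι :=
          { app := fun j => w j ≫ E.map (homOfLE hi₀i₁)
            naturality := fun j j' g => by
              have hg : homOfLE (leOfHom g) = g := Subsingleton.elim _ _
              have h := hnat j j' (leOfHom g)
              rw [hg] at h
              simpa using h } }
    refine ⟨i₁, hc.desc s, ?_⟩
    show f = hc.desc s ≫ d.ι.app i₁
    refine hc.hom_ext fun j => ?_
    calc c.ι.app j ≫ f = w j ≫ d.ι.app i₀ := (hwd j).symm
      _ = w j ≫ E.map (homOfLE hi₀i₁) ≫ d.ι.app i₁ := by rw [d.w]
      _ = s.ι.app j ≫ d.ι.app i₁ := by simp [s]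
      _ = (c.ι.app j ≫ hc.desc s) ≫ d.ι.app i₁ := by rw [hc.fac]
      _ = c.ι.app j ≫ hc.desc s ≫ d.ι.app i₁ := by rw [Category.assoc]
  · -- equality at a finite stage
    intro i i' x y hxy
    have hxy' : x ≫ d.ι.app i = y ≫ d.ι.app i' := hxy
    have hj : ∀ j : J, ∃ (k : I) (h1 : i ≤ k) (h2 : i' ≤ k),
        (c.ι.app j ≫ x) ≫ E.map (homOfLE h1) = (c.ι.app j ≫ y) ≫ E.map (homOfLE h2) := by
      intro j
      apply keyEq j i i'
      rw [Category.assoc, Category.assoc, hxy']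
    choose kj h1j h2j hkj using hj
    obtain ⟨b, hb⟩ := hbound J kj (hJθ.trans_lt hθν)
    obtain ⟨m₁, hm1, hm2⟩ := directed_of (· ≤ ·) b i
    obtain ⟨m, hm3, hm4⟩ := directed_of (· ≤ ·) m₁ i'
    have him : i ≤ m := hm2.trans hm3
    have him' : i' ≤ m := hm4
    refine ⟨m, homOfLE him, homOfLE him', ?_⟩
    show x ≫ E.map (homOfLE him) = y ≫ E.map (homOfLE him')
    refine hc.hom_ext fun j => ?_
    have hkm : kj j ≤ m := (hb j).trans (hm1.trans hm3)
    have e1 : (homOfLE him : i ⟶ m) = homOfLE (h1j j) ≫ homOfLE hkm :=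
      Subsingleton.elim _ _
    have e2 : (homOfLE him' : i' ⟶ m) = homOfLE (h2j j) ≫ homOfLE hkm :=
      Subsingleton.elim _ _
    rw [e1, e2, E.map_comp, E.map_comp]
    have h := congrArg (fun t => t ≫ E.map (homOfLE hkm)) (hkj j)
    dsimp at h
    simp only [Category.assoc] at h ⊢
    exact h
end

section
/- Let μ be a regular cardinal. In a category with μ-directed colimits, the colimit of a proper μ-directed system containing at most μ objects, each of which is μ-presentable, has presentability rank exactly μ⁺. -/
open CategoryTheory Limits Cardinal

universe u v u₂ v₂

section AuxStmt10

variable {K : Type u} [Category.{v} K]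

lemma auxNonempty10 {μ : Cardinal.{v}} {J : Type v} [Preorder J]
    (h : IsCardDirected μ J) (hμ : 0 < μ) : Nonempty J := by
  obtain ⟨b, -⟩ := h ∅ (by simpa using hμ)
  exact ⟨b⟩

lemma auxDirected10 {μ : Cardinal.{v}} {J : Type v} [Preorder J]
    (h : IsCardDirected μ J) (hμ : ℵ₀ ≤ μ) : IsDirected J (· ≤ ·) := by
  refine ⟨fun a b => ?_⟩
  obtain ⟨c, hc⟩ := h {a, b}
    (lt_of_lt_of_le (Set.toFinite ({a, b} : Set J)).lt_aleph0 hμ)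
  exact ⟨c, hc a (by simp), hc b (by simp)⟩

lemma auxBound10 {κ : Cardinal.{v}} {I : Type v} [Preorder I]
    (h : IsCardDirected κ I) {A : Type v} (f : A → I) (hA : #A < κ) :
    ∃ b, ∀ a, f a ≤ b := by
  obtain ⟨b, hb⟩ := h (Set.range f) (lt_of_le_of_lt Cardinal.mk_range_le hA)
  exact ⟨b, fun a => hb _ ⟨a, rfl⟩⟩

lemma auxFactor10 {M : K} {I : Type v} [Preorder I] {D' : I ⥤ K} {e : Cocone D'}
    (he : IsColimit e) [PreservesColimitsOfShape I (coyoneda.obj (Opposite.op M))]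
    (f : M ⟶ e.pt) : ∃ (i : I) (g : M ⟶ D'.obj i), g ≫ e.ι.app i = f := by
  obtain ⟨i, g, hg⟩ := Types.jointly_surjective _
    (isColimitOfPreserves (coyoneda.obj (Opposite.op M)) he) f
  exact ⟨i, g, hg⟩

lemma auxEqualize10 {M : K} {I : Type v} [Preorder I] [IsFilteredOrEmpty I]
    {D' : I ⥤ K} {e : Cocone D'} (he : IsColimit e)
    [PreservesColimitsOfShape I (coyoneda.obj (Opposite.op M))]
    {i : I} (u v : M ⟶ D'.obj i) (huv : u ≫ e.ι.app i = v ≫ e.ι.app i) :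
    ∃ (k : I) (f : i ⟶ k), u ≫ D'.map f = v ≫ D'.map f := by
  have he' := isColimitOfPreserves (coyoneda.obj (Opposite.op M)) he
  have h : ((coyoneda.obj (Opposite.op M)).mapCocone e).ι.app i u
      = ((coyoneda.obj (Opposite.op M)).mapCocone e).ι.app i v := huv
  rw [Types.FilteredColimit.isColimit_eq_iff _ he'] at h
  obtain ⟨k, f, g, hfg⟩ := h
  rw [Subsingleton.elim g f] at hfg
  exact ⟨k, f, hfg⟩

end AuxStmt10

/-- In a category with `μ`-directed colimits (`μ` regular), the colimit of a proper
`μ`-directed system with at most `μ` objects, each `μ`-presentable, has presentability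
rank exactly `μ⁺`. -/
theorem stmt10 {K : Type u} [Category.{v} K] (μ : Cardinal.{v}) (hμ : μ.IsRegular)
    (hK : HasMuDirectedColimits μ K)
    {J : Type v} [Preorder J] (hJ : IsCardDirected μ J) (hJμ : #J ≤ μ)
    (D : J ⥤ K) (hpres : ∀ j : J, IsPresentableObj μ (D.obj j))
    (c : Cocone D) (hc : IsColimit c)
    (hproper : ¬ ∃ (i : J) (g : c.pt ⟶ D.obj i), g ≫ c.ι.app i = 𝟙 c.pt) :
    HasPresRank (Order.succ μ) c.pt := by
  have hμ0 : ℵ₀ ≤ μ := hμ.aleph0_le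
  have hμsucc : μ < Order.succ μ := Order.lt_succ μ
  have hJne : Nonempty J := auxNonempty10 hJ (aleph0_pos.trans_le hμ0)
  refine ⟨Cardinal.isRegular_succ hμ0, ?_, ?_⟩
  · -- `c.pt` is `μ⁺`-presentable
    intro I ipre hI
    letI : Preorder I := ipre
    haveI : IsDirected I (· ≤ ·) := auxDirected10 hI (hμ0.trans hμsucc.le)
    haveI : Nonempty I := auxNonempty10 hI (aleph0_pos.trans_le (hμ0.trans hμsucc.le))
    have hIμ : IsCardDirected μ I := fun S hS => hI S (hS.trans hμsucc)
    refine ⟨⟨fun {D'} => ⟨fun {e} he => ⟨?_⟩⟩⟩⟩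
    apply Types.FilteredColimit.isColimitOf
    · -- joint surjectivity
      intro x
      have hx : ∀ j : J, ∃ (i : I) (g : D.obj j ⟶ D'.obj i),
          g ≫ e.ι.app i = c.ι.app j ≫ x := by
        intro j
        haveI := (hpres j I ipre hIμ).some
        exact auxFactor10 he _
      choose idx g0 hg0 using hx
      obtain ⟨i₀, hi₀⟩ := auxBound10 hI idx (hJμ.trans_lt hμsucc)
      set g' : ∀ j, D.obj j ⟶ D'.obj i₀ := fun j => g0 j ≫ D'.map (homOfLE (hi₀ j)) with hg'
      have hg1 : ∀ j, g' j ≫ e.ι.app i₀ = c.ι.app j ≫ x := by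
        intro j
        rw [hg']
        rw [Category.assoc, e.w, hg0]
      have hpair : ∀ (j j' : J) (hle : j ≤ j'), ∃ (k : I) (f : i₀ ⟶ k),
          (D.map (homOfLE hle) ≫ g' j') ≫ D'.map f = g' j ≫ D'.map f := by
        intro j j' hle
        haveI := (hpres j I ipre hIμ).some
        apply auxEqualize10 he
        rw [Category.assoc, hg1 j', ← Category.assoc, c.w, hg1 j]
      choose kk ff hff using hpair
      have hcard : #({p : J × J // p.1 ≤ p.2}) < Order.succ μ := by
        refine lt_of_le_of_lt (Cardinal.mk_subtype_le _) ?_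
        refine lt_of_le_of_lt ?_ hμsucc
        simp only [Cardinal.mk_prod, Cardinal.lift_id]
        calc #J * #J ≤ μ * μ := mul_le_mul' hJμ hJμ
          _ = μ := Cardinal.mul_eq_self hμ0
      obtain ⟨ℓ, hℓ⟩ := auxBound10 hI
        (fun p : {p : J × J // p.1 ≤ p.2} => kk p.1.1 p.1.2 p.2) hcard
      have hkℓ : ∀ (j j' : J) (h : j ≤ j'), kk j j' h ≤ ℓ := fun j j' h => hℓ ⟨(j, j'), h⟩
      have hi₀ℓ : i₀ ≤ ℓ := by
        obtain ⟨j₀⟩ := hJne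
        exact (leOfHom (ff j₀ j₀ le_rfl)).trans (hkℓ j₀ j₀ le_rfl)
      have hnat : ∀ {j j' : J} (f : j ⟶ j'),
          D.map f ≫ g' j' ≫ D'.map (homOfLE hi₀ℓ) = g' j ≫ D'.map (homOfLE hi₀ℓ) := by
        intro j j' f
        have hle : j ≤ j' := leOfHom f
        have h1 : (homOfLE hi₀ℓ : i₀ ⟶ ℓ) = ff j j' hle ≫ homOfLE (hkℓ j j' hle) :=
          Subsingleton.elim _ _
        have h2 : f = homOfLE hle := Subsingleton.elim _ _
        rw [h1, h2, D'.map_comp]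
        simp only [← Category.assoc]
        rw [hff j j' hle]
      let s : Cocone D :=
        { pt := D'.obj ℓ
          ι := { app := fun j => g' j ≫ D'.map (homOfLE hi₀ℓ)
                 naturality := by
                   intro j j' f
                   simpa using hnat f } }
      refine ⟨ℓ, hc.desc s, ?_⟩
      have hfinal : hc.desc s ≫ e.ι.app ℓ = x := by
        apply hc.hom_ext
        intro j
        rw [← Category.assoc, hc.fac s j]
        show (g' j ≫ D'.map (homOfLE hi₀ℓ)) ≫ e.ι.app ℓ = c.ι.app j ≫ x
        rw [Category.assoc, e.w, hg1]
      exact hfinal.symm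
    · -- joint injectivity
      intro i j u v huv
      have huv' : u ≫ e.ι.app i = v ≫ e.ι.app j := huv
      obtain ⟨k₀, hik, hjk⟩ := directed_of (· ≤ ·) i j
      have hx : ∀ jj : J, ∃ (k : I) (f : k₀ ⟶ k),
          ((c.ι.app jj ≫ u) ≫ D'.map (homOfLE hik)) ≫ D'.map f
            = ((c.ι.app jj ≫ v) ≫ D'.map (homOfLE hjk)) ≫ D'.map f := by
        intro jj
        haveI := (hpres jj I ipre hIμ).some
        apply auxEqualize10 he
        simp only [Category.assoc, e.w]
        rw [huv']
      choose kk ff hff using hx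
      obtain ⟨ℓ, hℓ⟩ := auxBound10 hI kk (hJμ.trans_lt hμsucc)
      have hk₀ℓ : k₀ ≤ ℓ := by
        obtain ⟨j₀⟩ := hJne
        exact (leOfHom (ff j₀)).trans (hℓ j₀)
      have key : (u ≫ D'.map (homOfLE hik)) ≫ D'.map (homOfLE hk₀ℓ)
          = (v ≫ D'.map (homOfLE hjk)) ≫ D'.map (homOfLE hk₀ℓ) := by
        apply hc.hom_ext
        intro jj
        have h1 : (homOfLE hk₀ℓ : k₀ ⟶ ℓ) = ff jj ≫ homOfLE (hℓ jj) := Subsingleton.elim _ _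
        rw [h1, D'.map_comp]
        simp only [← Category.assoc]
        rw [hff jj]
      refine ⟨ℓ, homOfLE (hik.trans hk₀ℓ), homOfLE (hjk.trans hk₀ℓ), ?_⟩
      show u ≫ D'.map (homOfLE (hik.trans hk₀ℓ)) = v ≫ D'.map (homOfLE (hjk.trans hk₀ℓ))
      have h2 : (homOfLE (hik.trans hk₀ℓ) : i ⟶ ℓ) = homOfLE hik ≫ homOfLE hk₀ℓ :=
        Subsingleton.elim _ _
      have h3 : (homOfLE (hjk.trans hk₀ℓ) : j ⟶ ℓ) = homOfLE hjk ≫ homOfLE hk₀ℓ :=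
        Subsingleton.elim _ _
      rw [h2, h3, D'.map_comp, D'.map_comp, ← Category.assoc, ← Category.assoc]
      exact key
  · -- minimality
    intro ν hν hpres'
    refine Order.succ_le_of_lt ?_
    by_contra hlt
    push_neg at hlt
    have hJν : IsCardDirected ν J := fun S hS => hJ S (hS.trans_le hlt)
    haveI := (hpres' J ‹Preorder J› hJν).some
    obtain ⟨j, g, hg⟩ := Types.jointly_surjective _
      (isColimitOfPreserves (coyoneda.obj (Opposite.op c.pt)) hc) (𝟙 c.pt)
    exact hproper ⟨j, g, hg⟩
end

section
/- If λ is a weakly inaccessible cardinal and K is a category that is (μ, <λ)-accessible for unboundedly many regular μ < λ, then K is (λ, <λ)-accessible. -/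
open CategoryTheory Limits Cardinal

universe u v u₂ v₂

/-!
Fix `M`. For cofinally many regular `μ < λ`, `M` is a `μ`-directed colimit of
`(<λ)`-presentable objects; every stage of every such presentation, together with its map to `M`,
is an object of the comma category `C` of stages over `M`. An object of `C` whose presentability
rank is at most `μ` maps into the presentation at `μ`, essentially uniquely. Since `λ` is regular
and a limit, fewer than `λ` objects and morphisms of `C` are all handled by a single presentation,
so `C` is `λ`-filtered, and by Deligne's theorem it receives a final functor from a `λ`-directed
poset. It remains to see that `M` is the colimit over `C`. The comparison map from that colimit
(which exists because `K` has `λ`-directed colimits) to `M` has a section built from any one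
presentation, and it is injective on maps out of `(<λ)`-presentable objects because `C` is
filtered; hence it is an isomorphism.
-/

universe w

lemma IsCardDirected.mono {μ ν : Cardinal.{v}} {J : Type v} [Preorder J]
    (h : IsCardDirected μ J) (hνμ : ν ≤ μ) : IsCardDirected ν J :=
  fun S hS => h S (hS.trans_le hνμ)

lemma isCardDirected_iff_isCardinalFiltered (μ : Cardinal.{v}) [Fact μ.IsRegular]
    (J : Type v) [Preorder J] : IsCardDirected μ J ↔ IsCardinalFiltered J μ := by
  refine ⟨fun h => isCardinalFiltered_preorder J μ fun _ s hs => ?_, fun _ S hS => ?_⟩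
  · obtain ⟨b, hb⟩ := h (Set.range s) (mk_range_le.trans_lt hs)
    exact ⟨b, fun k => hb _ ⟨k, rfl⟩⟩
  · have hS' : HasCardinalLT S μ := (hasCardinalLT_iff_cardinal_mk_lt _ _).mpr hS
    exact ⟨IsCardinalFiltered.max Subtype.val hS',
      fun s hs => leOfHom (IsCardinalFiltered.toMax Subtype.val hS' ⟨s, hs⟩)⟩

section Presentable

variable {K : Type u} [Category.{v} K]

lemma IsPresentableObj.mono {θ κ : Cardinal.{v}} {N : K} (h : IsPresentableObj θ N)
    (hθκ : θ ≤ κ) : IsPresentableObj κ N :=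
  fun J _ hJ => h J _ (hJ.mono hθκ)

lemma IsPresentableObj.isCardinalPresentable {θ : Cardinal.{v}} [Fact θ.IsRegular] {N : K}
    (h : IsPresentableObj θ N) : IsCardinalPresentable N θ where
  preservesColimitOfShape J _ _ := by
    obtain ⟨α, _, _, F, _⟩ := IsCardinalFiltered.exists_cardinal_directed J θ
    have := (h α _ ((isCardDirected_iff_isCardinalFiltered θ α).mpr ‹_›)).some
    exact Functor.Final.preservesColimitsOfShape_of_final F _

lemma IsLtPresentableObj.exists_lt_isPresentableObj {lam : Cardinal.{v}} {N : K}
    (h : IsLtPresentableObj lam N) (hlam : ℵ₀ < lam) : ∃ θ < lam, IsPresentableObj θ N := by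
  rw [IsLtPresentableObj, max_eq_left (succ_aleph0 ▸ Order.succ_le_of_lt hlam)] at h
  obtain ⟨θ, -, hθ, hN⟩ := h
  exact ⟨θ, hθ, hN⟩

end Presentable

namespace CategoryTheory

/-- `hhom` and `heq` are the two conditions of `Functor.final_iff_of_isFiltered` for `G i`,
required only at objects of rank at most `μ i`. -/
theorem isCardinalFiltered_of_final_below_rank {C : Type u} [Category.{v} C]
    {κ : Cardinal.{w}} [Fact κ.IsRegular] {ι : Type*} {J : ι → Type*} [∀ i, Category (J i)]
    {μ : ι → Cardinal.{w}} [∀ i, Fact (μ i).IsRegular]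
    [∀ i, IsCardinalFiltered (J i) (μ i)]
    (G : ∀ i, J i ⥤ C) (r : C → Cardinal.{w}) (hr : ∀ X, r X < κ)
    (hμ : ∀ ν < κ, ∃ i, ν < μ i)
    (hhom : ∀ i X, r X ≤ μ i → ∃ j, Nonempty (X ⟶ (G i).obj j))
    (heq : ∀ i X j (s s' : X ⟶ (G i).obj j), r X ≤ μ i →
      ∃ (j' : J i) (t : j ⟶ j'), s ≫ (G i).map t = s' ≫ (G i).map t) :
    IsCardinalFiltered C κ := by
  have hκ : κ.IsRegular := Fact.out
  rw [isCardinalFiltered_iff]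
  refine ⟨fun ι' X hι' => ?_, fun ι' X Y f hι' => ?_⟩
  · rw [hasCardinalLT_iff_cardinal_mk_lt] at hι'
    obtain ⟨i, hi⟩ := hμ (max (⨆ k, r (X k)) #ι')
      (max_lt (iSup_lt_of_lt_cof_ord (by rwa [hκ.cof_ord]) fun k => hr _) hι')
    have hX k : r (X k) ≤ μ i :=
      (le_ciSup bddAbove_of_small k).trans ((le_max_left _ _).trans hi.le)
    have hι'μ : HasCardinalLT ι' (μ i) :=
      (hasCardinalLT_iff_cardinal_mk_lt _ _).mpr ((le_max_right _ _).trans_lt hi)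
    choose j s using fun k => hhom i (X k) (hX k)
    exact ⟨(G i).obj (IsCardinalFiltered.max j hι'μ),
      fun k => ⟨(s k).some ≫ (G i).map (IsCardinalFiltered.toMax j hι'μ k)⟩⟩
  · rw [hasCardinalLT_iff_cardinal_mk_lt] at hι'
    obtain ⟨i, hi⟩ := hμ (max (max (r X) (r Y)) #ι') (max_lt (max_lt (hr X) (hr Y)) hι')
    have hX : r X ≤ μ i := (le_max_left _ _).trans ((le_max_left _ _).trans hi.le)
    have hY : r Y ≤ μ i := (le_max_right _ _).trans ((le_max_left _ _).trans hi.le)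
    have hι'μ : HasCardinalLT ι' (μ i) :=
      (hasCardinalLT_iff_cardinal_mk_lt _ _).mpr ((le_max_right _ _).trans_lt hi)
    have := isFiltered_of_isCardinalFiltered (J i) (μ i)
    obtain ⟨jY, ⟨sY⟩⟩ := hhom i Y hY
    obtain ⟨jX, ⟨sX⟩⟩ := hhom i X hX
    let t := sY ≫ (G i).map (IsFiltered.leftToMax jY jX)
    let t' := sX ≫ (G i).map (IsFiltered.rightToMax jY jX)
    choose m u hu using fun k => heq i X _ (f k ≫ t) t' hX
    obtain ⟨l, a, b, hab⟩ := IsCardinalFiltered.wideSpan u hι'μ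
    refine ⟨(G i).obj l, t ≫ (G i).map b, t' ≫ (G i).map b, fun k => ?_⟩
    simp only [← hab k, Functor.map_comp, ← Category.assoc, hu k]

namespace Functor

variable {A : Type*} [Category* A] {K : Type*} [Category* K] {F : A ⥤ K} {M : K}

lemma exists_hom_of_isColimit_fromCostructuredArrow [F.Full]
    {κ : Cardinal.{w}} [Fact κ.IsRegular] {J : Type w} [SmallCategory J] [IsCardinalFiltered J κ]
    {G : J ⥤ CostructuredArrow F M} (hG : IsColimit (Cocone.fromCostructuredArrow F G))
    (X : CostructuredArrow F M) [IsCardinalPresentable (F.obj X.left) κ] :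
    ∃ j, Nonempty (X ⟶ G.obj j) := by
  obtain ⟨j, f, hf⟩ := IsCardinalPresentable.exists_hom_of_isColimit κ hG X.hom
  obtain ⟨f, rfl⟩ := F.map_surjective f
  exact ⟨j, ⟨CostructuredArrow.homMk f hf⟩⟩

lemma exists_eq_of_isColimit_fromCostructuredArrow [F.Faithful]
    {κ : Cardinal.{w}} [Fact κ.IsRegular] {J : Type w} [SmallCategory J] [IsCardinalFiltered J κ]
    {G : J ⥤ CostructuredArrow F M} (hG : IsColimit (Cocone.fromCostructuredArrow F G))
    {X : CostructuredArrow F M} [IsCardinalPresentable (F.obj X.left) κ] {j : J}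
    (s s' : X ⟶ G.obj j) : ∃ (j' : J) (t : j ⟶ j'), s ≫ G.map t = s' ≫ G.map t := by
  obtain ⟨j', t, ht⟩ := IsCardinalPresentable.exists_eq_of_isColimit' κ hG
    (F.map s.left) (F.map s'.left) ((CostructuredArrow.w s).trans (CostructuredArrow.w s').symm)
  refine ⟨j', t, CostructuredArrow.hom_ext _ _ (F.map_injective ?_)⟩
  simp only [CostructuredArrow.comp_left, F.map_comp]
  exact ht

lemma eq_of_comp_desc_eq [F.Full] [IsFiltered (CostructuredArrow F M)]
    {c : Cocone (𝟭 _ ⋙ CostructuredArrow.proj F M ⋙ F)} (hc : IsColimit c) {X : A}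
    [PreservesColimit (𝟭 _ ⋙ CostructuredArrow.proj F M ⋙ F)
      (coyoneda.obj (Opposite.op (F.obj X)))]
    {x y : F.obj X ⟶ c.pt}
    (hxy : x ≫ hc.desc (Cocone.fromCostructuredArrow F (𝟭 _)) =
      y ≫ hc.desc (Cocone.fromCostructuredArrow F (𝟭 _))) : x = y := by
  obtain ⟨Z, x, rfl⟩ := exists_hom_of_preservesColimit_coyoneda hc x
  obtain ⟨Z', y, rfl⟩ := exists_hom_of_preservesColimit_coyoneda hc y
  obtain ⟨x, rfl⟩ := F.map_surjective x
  obtain ⟨y, rfl⟩ := F.map_surjective y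
  change X ⟶ Z.left at x
  change X ⟶ Z'.left at y
  simp only [Category.assoc, hc.fac] at hxy
  -- `x` and `y` are morphisms of `CostructuredArrow F M` out of one object, joined by filteredness
  let a : CostructuredArrow.mk (F.map x ≫ Z.hom) ⟶ Z := CostructuredArrow.homMk x rfl
  let b : CostructuredArrow.mk (F.map x ≫ Z.hom) ⟶ Z' := CostructuredArrow.homMk y hxy.symm
  obtain ⟨W, u, u', h⟩ := IsFiltered.span a b
  have hι {Z W : CostructuredArrow F M} (f : X ⟶ Z.left) (u : Z ⟶ W) :
      F.map f ≫ c.ι.app Z = F.map (f ≫ u.left) ≫ c.ι.app W :=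
    (congrArg (F.map f ≫ ·) (c.w u)).symm.trans (F.map_comp_assoc f u.left _).symm
  calc F.map x ≫ c.ι.app Z = F.map (x ≫ u.left) ≫ c.ι.app W := hι x u
    _ = F.map (y ≫ u'.left) ≫ c.ι.app W := congrArg (fun g => F.map g.left ≫ c.ι.app W) h
    _ = F.map y ≫ c.ι.app Z' := (hι y u').symm

noncomputable def isColimitFromCostructuredArrowOfIsColimit [F.Full]
    [IsFiltered (CostructuredArrow F M)] [HasColimit (𝟭 _ ⋙ CostructuredArrow.proj F M ⋙ F)]
    [∀ X : A, PreservesColimit (𝟭 _ ⋙ CostructuredArrow.proj F M ⋙ F)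
      (coyoneda.obj (Opposite.op (F.obj X)))]
    {J : Type*} [Category* J] {G : J ⥤ CostructuredArrow F M}
    (hG : IsColimit (Cocone.fromCostructuredArrow F G)) :
    IsColimit (Cocone.fromCostructuredArrow F (𝟭 (CostructuredArrow F M))) := by
  let hc := colimit.isColimit (𝟭 _ ⋙ CostructuredArrow.proj F M ⋙ F)
  let w : colimit (𝟭 _ ⋙ CostructuredArrow.proj F M ⋙ F) ⟶ M :=
    hc.desc (Cocone.fromCostructuredArrow F (𝟭 _))
  let v : M ⟶ colimit (𝟭 _ ⋙ CostructuredArrow.proj F M ⋙ F) :=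
    hG.desc ((colimit.cocone (𝟭 _ ⋙ CostructuredArrow.proj F M ⋙ F)).whisker G)
  have hvw : v ≫ w = 𝟙 M := hG.hom_ext fun j => by
    erw [hG.fac_assoc, hc.fac]
    exact (Category.comp_id _).symm
  have hwv : w ≫ v = 𝟙 _ := hc.hom_ext fun X =>
    F.eq_of_comp_desc_eq hc
      (by erw [Category.assoc, Category.assoc, hvw, Category.comp_id, Category.comp_id])
  exact IsColimit.ofIsoColimit hc (Cocone.ext ⟨w, v, hwv, hvw⟩ (hc.fac _))

end Functor

end CategoryTheory

section Stages

variable {K : Type u} [Category.{v} K] {ι : Type v} {J : ι → Type v}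
  [∀ i, SmallCategory (J i)] {D : ∀ i, J i ⥤ K} {M : K}

def stage (D : ∀ i, J i ⥤ K) (p : Σ i, J i) : K := (D p.1).obj p.2

def stageArrow (c : ∀ i, D i ⟶ (Functor.const (J i)).obj M) (i : ι) :
    J i ⥤ CostructuredArrow (inducedFunctor (stage D)) M where
  obj j := CostructuredArrow.mk (S := inducedFunctor (stage D))
    (Y := (show InducedCategory K (stage D) from ⟨i, j⟩)) ((c i).app j : (D i).obj j ⟶ M)
  map {j j'} u := CostructuredArrow.homMk
    (InducedCategory.homMk (X := (show InducedCategory K (stage D) from ⟨i, j⟩))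
      (Y := (show InducedCategory K (stage D) from ⟨i, j'⟩)) ((D i).map u))
    (((c i).naturality u).trans (Category.comp_id _))

variable {lam : Cardinal.{v}} [Fact lam.IsRegular] {μ : ι → Cardinal.{v}}
  [∀ i, Fact (μ i).IsRegular] [∀ i, IsCardinalFiltered (J i) (μ i)]

theorem isCardinalFiltered_costructuredArrow_stage (hlam : ℵ₀ < lam)
    (hμ : ∀ κ < lam, ∃ i, κ < μ i)
    (c : ∀ i, D i ⟶ (Functor.const (J i)).obj M) (hc : ∀ i, IsColimit (Cocone.mk M (c i)))
    (hpres : ∀ i j, IsLtPresentableObj lam ((D i).obj j)) :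
    IsCardinalFiltered (CostructuredArrow (inducedFunctor (stage D)) M) lam := by
  choose θ hθlam hθ using fun p : Σ i, J i => (hpres p.1 p.2).exists_lt_isPresentableObj hlam
  have hθ' (p : InducedCategory K (stage D)) (κ : Cardinal.{v}) [Fact κ.IsRegular]
      (h : θ p ≤ κ) : IsCardinalPresentable ((inducedFunctor (stage D)).obj p) κ :=
    ((hθ p).mono h).isCardinalPresentable
  exact isCardinalFiltered_of_final_below_rank (stageArrow c) (fun X => θ X.left)
    (fun X => hθlam _) hμ
    (fun i X h => have := hθ' X.left (μ i) h
      Functor.exists_hom_of_isColimit_fromCostructuredArrow (κ := μ i)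
        (G := stageArrow c i) (hc i) X)
    (fun i X j s s' h => have := hθ' X.left (μ i) h
      Functor.exists_eq_of_isColimit_fromCostructuredArrow (κ := μ i)
        (G := stageArrow c i) (hc i) s s')

theorem exists_cardDirected_presentation_of_presentations (hlam : ℵ₀ < lam)
    (hcol : HasMuDirectedColimits lam K) (hμ : ∀ κ < lam, ∃ i, κ < μ i)
    (c : ∀ i, D i ⟶ (Functor.const (J i)).obj M) (hc : ∀ i, IsColimit (Cocone.mk M (c i)))
    (hpres : ∀ i j, IsLtPresentableObj lam ((D i).obj j)) :
    ∃ (α : Type v) (_ : Preorder α) (E : α ⥤ K) (e : Cocone E), IsCardDirected lam α ∧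
      (∀ a, IsLtPresentableObj lam (E.obj a)) ∧ Nonempty (IsColimit e) ∧ e.pt = M := by
  let C := CostructuredArrow (inducedFunctor (stage D)) M
  have : IsCardinalFiltered C lam := isCardinalFiltered_costructuredArrow_stage hlam hμ c hc hpres
  obtain ⟨α, _, _, Φ, _⟩ := IsCardinalFiltered.exists_cardinal_directed C lam
  have hα : IsCardDirected lam α := (isCardDirected_iff_isCardinalFiltered lam α).mpr ‹_›
  have : HasColimitsOfShape α K := hcol α _ hα
  have := Functor.Final.hasColimitsOfShape_of_final Φ (E := K)
  have := isFiltered_of_isCardinalFiltered C lam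
  have (p : InducedCategory K (stage D)) : PreservesColimit
      (𝟭 C ⋙ CostructuredArrow.proj _ M ⋙ inducedFunctor (stage D))
      (coyoneda.obj (Opposite.op ((inducedFunctor (stage D)).obj p))) := by
    obtain ⟨θ, hθ, hp⟩ := (hpres p.1 p.2).exists_lt_isPresentableObj hlam
    have : IsCardinalPresentable ((inducedFunctor (stage D)).obj p) lam :=
      (hp.mono hθ.le).isCardinalPresentable
    have := preservesColimitsOfShape_of_isCardinalPresentable
      ((inducedFunctor (stage D)).obj p) lam C
    infer_instance
  obtain ⟨i, -⟩ := hμ 0 (Fact.out : lam.IsRegular).pos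
  exact ⟨α, _, _, _, hα, fun a => hpres _ _, ⟨(Functor.Final.isColimitWhiskerEquiv Φ _).symm
    (Functor.isColimitFromCostructuredArrowOfIsColimit (G := stageArrow c i) (hc i))⟩, rfl⟩

end Stages

/-- If `λ` is weakly inaccessible and `K` is `(μ, <λ)`-accessible for unboundedly many
regular `μ < λ`, then `K` is `(λ, <λ)`-accessible. -/
theorem stmt12 {K : Type u} [Category.{v} K] (lam : Cardinal.{v})
    (hreg : lam.IsRegular) (hlim : Order.IsSuccLimit lam) (hunc : ℵ₀ < lam)
    (hacc : ∀ κ < lam, ∃ μ : Cardinal.{v}, κ ≤ μ ∧ μ < lam ∧ μ.IsRegular ∧ IsAccCat μ lam K) :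
    IsAccCat lam lam K := by
  have : Fact lam.IsRegular := ⟨hreg⟩
  obtain ⟨μ₀, -, hμ₀, -, hacc₀⟩ := hacc 0 hreg.pos
  have hcol : HasMuDirectedColimits lam K := fun J _ hJ => hacc₀.1 J _ (hJ.mono hμ₀.le)
  refine ⟨hcol, hacc₀.2.1, fun M => ?_⟩
  have hpresentations (κ : Shrink.{v} (Set.Iio lam)) : ∃ (μ : Cardinal.{v}) (J : Type v)
      (_ : Preorder J) (D : J ⥤ K) (c : D ⟶ (Functor.const J).obj M),
      ((equivShrink _).symm κ).1 < μ ∧ μ.IsRegular ∧ IsCardDirected μ J ∧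
      (∀ j, IsLtPresentableObj lam (D.obj j)) ∧ Nonempty (IsColimit (Cocone.mk M c)) := by
    obtain ⟨μ, hκμ, -, hμ, -, -, hM⟩ := hacc _ (hlim.succ_lt ((equivShrink _).symm κ).2)
    obtain ⟨J, _, D, c, hJ, hD, hc, rfl⟩ := hM M
    exact ⟨μ, J, _, D, c.ι, (Order.lt_succ _).trans_le hκμ, hμ, hJ, hD, hc⟩
  choose μ J _ D c hκμ hμ hJ hD hc using hpresentations
  have : ∀ κ, Fact (μ κ).IsRegular := fun κ => ⟨hμ κ⟩
  have : ∀ κ, IsCardinalFiltered (J κ) (μ κ) :=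
    fun κ => (isCardDirected_iff_isCardinalFiltered _ _).mp (hJ κ)
  exact exists_cardDirected_presentation_of_presentations hunc hcol
    (fun κ hκ => ⟨equivShrink _ ⟨κ, hκ⟩, by simpa using hκμ (equivShrink _ ⟨κ, hκ⟩)⟩)
    c (fun κ => (hc κ).some) hD
end

section
/- Let λ be a regular cardinal and K a λ-accessible category. If K has an object that is not (<λ)-presentable and K has no proper λ-directed systems of (<λ)-presentable objects, then K has an object of presentability rank exactly λ. -/
open CategoryTheory Limits Cardinal

universe u v u₂ v₂

/-!
Write a non-`(<λ)`-presentable `M` as a `λ`-directed colimit of `(<λ⁺)`-, i.e. `λ`-presentable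
objects. If all of them were `(<λ)`-presentable, the system could not be proper, so `M` would be a
retract of one of them and hence `(<λ)`-presentable itself. So some object of the system is
`λ`-presentable but not `θ`-presentable for any regular `θ < λ`: its rank is exactly `λ`.
-/

namespace CategoryTheory.Retract

variable {C : Type u} [Category.{v} C] {D : Type u₂} [Category.{v₂} D] {F G : C ⥤ D}

lemma app_retract (h : Retract F G) (X : C) : h.i.app X ≫ h.r.app X = 𝟙 (F.obj X) := by
  rw [← NatTrans.comp_app, h.retract, NatTrans.id_app]

/-- The colimit structure on `F.mapCocone c` is transported from `G.mapCocone c` along `h.i`,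
and uniqueness follows by precomposing a competitor with `h.r`. -/
lemma preservesColimit (h : Retract F G) {J : Type*} [Category J] {E : J ⥤ C}
    [PreservesColimit E G] : PreservesColimit E F where
  preserves {c} hc := by
    obtain ⟨hG⟩ := PreservesColimit.preserves (F := G) hc
    let lift : (s : Cocone (E ⋙ F)) → G.obj c.pt ⟶ s.pt := fun s =>
      hG.desc ((Cocone.precompose (Functor.whiskerLeft E h.r)).obj s)
    have lift_fac (s : Cocone (E ⋙ F)) (j : J) :
        G.map (c.ι.app j) ≫ lift s = h.r.app (E.obj j) ≫ s.ι.app j :=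
      hG.fac ((Cocone.precompose (Functor.whiskerLeft E h.r)).obj s) j
    refine ⟨{ desc := fun s => h.i.app c.pt ≫ lift s
              fac := fun s j => ?_
              uniq := fun s m hm => ?_ }⟩
    · dsimp only [Functor.mapCocone_ι_app]
      rw [h.i.naturality_assoc, lift_fac, ← Category.assoc, h.app_retract, Category.id_comp]
    · have hrm : h.r.app c.pt ≫ m = lift s := by
        refine hG.uniq ((Cocone.precompose (Functor.whiskerLeft E h.r)).obj s) _ fun j => ?_
        dsimp at hm ⊢
        rw [h.r.naturality_assoc, hm]
      rw [← hrm, ← Category.assoc, h.app_retract]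
      exact (Category.id_comp m).symm

lemma preservesColimitsOfShape (h : Retract F G) {J : Type*} [Category J]
    [PreservesColimitsOfShape J G] : PreservesColimitsOfShape J F where
  preservesColimit := h.preservesColimit

end CategoryTheory.Retract

section Presentability

variable {K : Type u} [Category.{v} K]

lemma IsPresentableObj.mono_s14 {θ μ : Cardinal.{v}} (hθμ : θ ≤ μ) {M : K}
    (hM : IsPresentableObj θ M) : IsPresentableObj μ M :=
  fun J _ hJ => hM J _ fun S hS => hJ S (hS.trans_le hθμ)

lemma IsPresentableObj.of_retract {θ : Cardinal.{v}} {M N : K} (h : Retract M N)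
    (hN : IsPresentableObj θ N) : IsPresentableObj θ M := fun J _ hJ =>
  have := (hN J _ hJ).some
  ⟨(h.op.map coyoneda).preservesColimitsOfShape⟩

lemma IsLtPresentableObj.of_retract {lam : Cardinal.{v}} {M N : K} (h : Retract M N)
    (hN : IsLtPresentableObj lam N) : IsLtPresentableObj lam M :=
  let ⟨θ, hθ, hθlam, hNθ⟩ := hN
  ⟨θ, hθ, hθlam, hNθ.of_retract h⟩

/-- Since `ℵ₀ ≤ λ`, the bound `max λ⁺ ℵ₁` in `IsLtPresentableObj` is just `λ⁺`. -/
lemma IsLtPresentableObj.isPresentableObj_of_succ {lam : Cardinal.{v}} (hlam : ℵ₀ ≤ lam)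
    {M : K} (hM : IsLtPresentableObj (Order.succ lam) M) : IsPresentableObj lam M := by
  obtain ⟨θ, -, hθ, hMθ⟩ := hM
  have hmax : max (Order.succ lam) (aleph 1) = Order.succ lam :=
    max_eq_left (succ_aleph0 ▸ Order.succ_le_succ hlam)
  exact hMθ.mono_s14 (Order.lt_succ_iff.mp (hmax ▸ hθ))

lemma hasPresRank_of_not_isLtPresentableObj {lam : Cardinal.{v}} (hlam : lam.IsRegular) {M : K}
    (hM : IsPresentableObj lam M) (hM' : ¬ IsLtPresentableObj lam M) : HasPresRank lam M :=
  ⟨hlam, hM, fun ν hν hMν => not_lt.mp fun hνlam =>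
    hM' ⟨ν, hν, hνlam.trans_le (le_max_left _ _), hMν⟩⟩

end Presentability

/-- If `K` is `λ`-accessible (`λ` regular), has an object that is not `(<λ)`-presentable,
and has no proper `λ`-directed systems of `(<λ)`-presentable objects, then `K` has an object
of presentability rank exactly `λ`. -/
theorem stmt14 {K : Type u} [Category.{v} K] (lam : Cardinal.{v}) (hlam : lam.IsRegular)
    (hacc : IsAccCat lam (Order.succ lam) K)
    (hbig : ∃ M : K, ¬ IsLtPresentableObj lam M)
    (hnoproper : ¬ ∃ (J : Type v) (_ : Preorder J) (D : J ⥤ K) (c : Cocone D)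
        (_ : IsColimit c),
      IsCardDirected lam J ∧ (∀ j : J, IsLtPresentableObj lam (D.obj j)) ∧
      ¬ ∃ (i : J) (g : c.pt ⟶ D.obj i), g ≫ c.ι.app i = 𝟙 c.pt) :
    ∃ M : K, HasPresRank lam M := by
  obtain ⟨M, hM⟩ := hbig
  obtain ⟨J, _, D, c, hdir, hpres, ⟨hc⟩, rfl⟩ := hacc.2.2 M
  obtain ⟨j, hj⟩ : ∃ j, ¬ IsLtPresentableObj lam (D.obj j) := by
    by_contra! hall
    obtain ⟨i, g, hg⟩ := not_not.mp fun h => hnoproper ⟨J, _, D, c, hc, hdir, hall, h⟩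
    exact hM ((hall i).of_retract ⟨g, c.ι.app i, hg⟩)
  exact ⟨D.obj j, hasPresRank_of_not_isLtPresentableObj hlam
    ((hpres j).isPresentableObj_of_succ hlam.aleph0_le) hj⟩
end

section
/- Let F: K → L be a functor between categories that preserves μ-directed colimits and reflects split epimorphisms, where μ is regular. Suppose λ > μ is a cardinal such that for every regular cardinal ν with μ ≤ ν < λ, every object of K is a ν-directed colimit of (<λ)-presentable objects. If M is an object of K such that F M is (<λ)-presentable in L, then M is (<λ)-presentable in K. -/
open CategoryTheory Limits Cardinal

universe u v u₂ v₂

/-- A `θ`-directed preorder (for `θ` regular) is nonempty. -/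
lemma IsCardDirected.nonempty {θ : Cardinal.{v}} (hθ : θ.IsRegular) {J : Type v} [Preorder J]
    (h : IsCardDirected θ J) : Nonempty J := by
  obtain ⟨b, -⟩ := h ∅ (by
    simpa using lt_of_lt_of_le aleph0_pos hθ.aleph0_le)
  exact ⟨b⟩

/-- A `θ`-directed preorder (for `θ` regular) is directed. -/
lemma IsCardDirected.isDirected {θ : Cardinal.{v}} (hθ : θ.IsRegular) {J : Type v} [Preorder J]
    (h : IsCardDirected θ J) : IsDirected J (· ≤ ·) := by
  constructor
  intro a b
  obtain ⟨c, hc⟩ := h {a, b}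
    (lt_of_lt_of_le (((Set.finite_singleton b).insert a).lt_aleph0) hθ.aleph0_le)
  exact ⟨c, hc a (by simp), hc b (by simp)⟩

/-- Monotonicity of card-directedness. -/
lemma IsCardDirected.of_le {θ θ' : Cardinal.{v}} (hle : θ' ≤ θ) {J : Type v} [Preorder J]
    (h : IsCardDirected θ J) : IsCardDirected θ' J :=
  fun S hS => h S (hS.trans_le hle)

/-- A retract of a `θ`-presentable object is `θ`-presentable. -/
lemma IsPresentableObj.of_retract_s16 {θ : Cardinal.{v}} (hθ : θ.IsRegular)
    {K : Type u} [Category.{v} K] {M N : K} (s : M ⟶ N) (r : N ⟶ M) (hsr : s ≫ r = 𝟙 M)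
    (hN : IsPresentableObj θ N) : IsPresentableObj θ M := by
  intro J _ hJ
  haveI : Nonempty J := hJ.nonempty hθ
  haveI : IsDirected J (· ≤ ·) := hJ.isDirected hθ
  obtain ⟨hNp⟩ := hN J ‹_› hJ
  refine ⟨⟨fun {D} => ⟨fun {c} hc => ?_⟩⟩⟩
  have hGc : IsColimit ((coyoneda.obj (Opposite.op N)).mapCocone c) :=
    isColimitOfPreserves _ hc
  refine ⟨Types.FilteredColimit.isColimitOf _ _ ?_ ?_⟩
  · intro f
    obtain ⟨j, g, hg⟩ := Types.jointly_surjective _ hGc (r ≫ f)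
    refine ⟨j, s ≫ g, ?_⟩
    have hg' : g ≫ c.ι.app j = r ≫ f := hg
    show f = (s ≫ g) ≫ c.ι.app j
    rw [Category.assoc, hg', ← Category.assoc, hsr, Category.id_comp]
  · intro i j fi fj hij
    have hij' : ((coyoneda.obj (Opposite.op N)).mapCocone c).ι.app i (r ≫ fi) =
        ((coyoneda.obj (Opposite.op N)).mapCocone c).ι.app j (r ≫ fj) := by
      have h1 : fi ≫ c.ι.app i = fj ≫ c.ι.app j := hij
      show (r ≫ fi) ≫ c.ι.app i = (r ≫ fj) ≫ c.ι.app j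
      rw [Category.assoc, Category.assoc, h1]
    rw [Types.FilteredColimit.isColimit_eq_iff _ hGc] at hij'
    obtain ⟨k, u, v, huv⟩ := hij'
    refine ⟨k, u, v, ?_⟩
    have huv' : (r ≫ fi) ≫ D.map u = (r ≫ fj) ≫ D.map v := huv
    show fi ≫ D.map u = fj ≫ D.map v
    have := congrArg (fun t => s ≫ t) huv'
    simpa [← Category.assoc, hsr] using this

/-- Let `F : K ⥤ L` preserve `μ`-directed colimits and reflect split epimorphisms, `μ`
regular. Suppose `λ > μ` is such that for every regular `ν` with `μ ≤ ν < λ`, every object of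
`K` is a `ν`-directed colimit of `(<λ)`-presentable objects. If `F M` is `(<λ)`-presentable,
then so is `M`. -/
theorem stmt16 {K : Type u} [Category.{v} K] {L : Type u₂} [Category.{v} L]
    (F : K ⥤ L) (μ lam : Cardinal.{v}) (hμ : μ.IsRegular) (hμlam : μ < lam)
    (hrefl : ∀ {A B : K} (f : A ⟶ B), IsSplitEpi (F.map f) → IsSplitEpi f)
    (hpresv : ∀ (J : Type v) (_ : Preorder J), IsCardDirected μ J →
      Nonempty (PreservesColimitsOfShape J F))
    (hacc : ∀ ν : Cardinal.{v}, ν.IsRegular → μ ≤ ν → ν < lam →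
      ∀ M : K, ∃ (J : Type v) (_ : Preorder J) (D : J ⥤ K) (c : Cocone D),
        IsCardDirected ν J ∧ (∀ j, IsLtPresentableObj lam (D.obj j)) ∧
        Nonempty (IsColimit c) ∧ c.pt = M)
    (M : K) (hFM : IsLtPresentableObj lam (F.obj M)) :
    IsLtPresentableObj lam M := by
  obtain ⟨θ, hθreg, hθlt, hθpres⟩ := hFM
  -- `θ < lam`
  have hθlam : θ < lam := by
    rcases le_or_gt (Cardinal.aleph 1) lam with h | h
    · rwa [max_eq_left h] at hθlt
    · have : θ < Cardinal.aleph 1 := hθlt.trans_le (max_le h.le le_rfl)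
      have hθ0 : θ ≤ ℵ₀ := by
        rw [← Cardinal.succ_aleph0] at this
        exact Order.lt_succ_iff.mp this
      exact lt_of_le_of_lt (hθ0.trans hμ.aleph0_le) hμlam
  -- `ν := max μ θ`
  set ν : Cardinal.{v} := max μ θ with hν
  have hνreg : ν.IsRegular := by
    rcases le_total μ θ with h | h
    · rwa [hν, max_eq_right h]
    · rwa [hν, max_eq_left h]
  have hμν : μ ≤ ν := le_max_left _ _
  have hθν : θ ≤ ν := le_max_right _ _
  have hνlam : ν < lam := max_lt hμlam hθlam
  obtain ⟨J, pJ, D, c, hdir, hpres, ⟨hc⟩, hpt⟩ := hacc ν hνreg hμν hνlam M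
  subst hpt
  -- `F` preserves colimits of shape `J`
  obtain ⟨hFpres⟩ := hpresv J pJ (hdir.of_le hμν)
  have hFc : IsColimit (F.mapCocone c) := isColimitOfPreserves F hc
  -- `F c.pt` is `θ`-presentable and `J` is `θ`-directed
  obtain ⟨hcoy⟩ := hθpres J pJ (hdir.of_le hθν)
  have hcc : IsColimit ((coyoneda.obj (Opposite.op (F.obj c.pt))).mapCocone (F.mapCocone c)) :=
    isColimitOfPreserves _ hFc
  -- the identity of `F c.pt` factors through some stage
  obtain ⟨j, g, hg⟩ := Types.jointly_surjective _ hcc (𝟙 (F.obj c.pt))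
  have hg' : g ≫ F.map (c.ι.app j) = 𝟙 (F.obj c.pt) := hg
  have hsplit : IsSplitEpi (c.ι.app j) := hrefl _ ⟨⟨g, hg'⟩⟩
  -- so `c.pt` is a retract of `D.obj j`, which is `(<λ)`-presentable
  obtain ⟨θ', hθ'reg, hθ'lt, hθ'pres⟩ := hpres j
  exact ⟨θ', hθ'reg, hθ'lt,
    hθ'pres.of_retract_s16 hθ'reg (section_ (c.ι.app j)) (c.ι.app j) (by simp)⟩
end

section
/- Let λ be a regular cardinal and let μ < λ be a regular cardinal. In any category, if ⟨M_i : i < μ⟩ is a chain of (<λ)-presentable objects indexed by μ whose colimit M is not (<λ)-presentable, then λ is a successor cardinal λ₀⁺ and μ = cf(λ₀). -/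
open CategoryTheory Limits Cardinal

universe u v u₂ v₂

/-!
The colimit of a `μ`-chain of `ν`-presentable objects, `μ < ν` regular, is `ν`-presentable,
since `ν`-directed colimits commute with colimits of fewer than `ν` arrows; it suffices that
the objects on a cofinal part of the chain be `ν`-presentable. So if the colimit is not
`(<λ)`-presentable, no regular `ν` with `μ < ν < λ` bounds the presentability ranks
`θᵢ < λ` of the `Mᵢ` on a cofinal set. If `λ` is a limit cardinal, `ν = (sup θᵢ + μ)⁺` works
because `μ < cf λ = λ`. If `λ = λ₀⁺` with `μ ≠ cf λ₀`, then either `λ₀` is regular and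
`ν = λ₀` works, or all `θᵢ < λ₀` and they are bounded below `λ₀` on a cofinal set: by their
supremum when `μ < cf λ₀`, and by pigeonhole on a cofinal sequence of length `cf λ₀ < μ`
otherwise.
-/

namespace Cardinal

theorem exists_isCofinal_forall_le_of_cof_ne {α : Type v} [LinearOrder α] {κ : Cardinal.{v}}
    {f : α → Cardinal.{v}} (hf : ∀ i, f i < κ) (hα : Order.cof α ≠ κ.ord.cof) :
    ∃ ρ < κ, ∃ S : Set α, IsCofinal S ∧ ∀ i ∈ S, f i ≤ ρ := by
  rcases hα.lt_or_gt with hlt | hgt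
  · obtain ⟨T, hT, hTcard⟩ := Order.exists_cof_eq α
    exact ⟨⨆ i : T, f i, iSup_lt_of_lt_cof_ord (hTcard ▸ hlt) fun i ↦ hf i, T, hT,
      fun i hi ↦ le_ciSup bddAbove_of_small (⟨i, hi⟩ : T)⟩
  · obtain ⟨T, hT, hTcard⟩ := Order.exists_cof_eq κ.ord.ToType
    have hcover : IsCofinal (⋃ t : T, {i | (f i).ord ≤ (t.1 : Ordinal)}) := by
      refine IsCofinal.mono (fun i _ ↦ ?_) IsCofinal.univ
      obtain ⟨t, ht, hle⟩ := hT (Ordinal.ToType.mk ⟨(f i).ord, ord_lt_ord.2 (hf i)⟩)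
      exact Set.mem_iUnion.2 ⟨⟨t, ht⟩, Ordinal.ToType.mk.le_symm_apply.2 hle⟩
    obtain ⟨t, ht⟩ := isCofinal_of_isCofinal_iUnion hcover
      (by rwa [hTcard, Ordinal.cof_toType])
    exact ⟨(t.1 : Ordinal).card, lt_ord.1 t.1.toOrd.2, _, ht, fun i hi ↦ ord_le.1 hi⟩

theorem exists_isRegular_isCofinal_forall_le {α : Type v} [LinearOrder α]
    {μ lam : Cardinal.{v}} (hα : Order.cof α = μ) (hμ : μ.IsRegular) (hlam : lam.IsRegular)
    (hμlam : μ < lam) {f : α → Cardinal.{v}} (hf : ∀ i, f i < lam) (hfreg : ∀ i, (f i).IsRegular)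
    (h : ¬ ∃ lam₀ : Cardinal.{v}, lam = Order.succ lam₀ ∧ μ = lam₀.ord.cof) :
    ∃ ν : Cardinal.{v}, ν.IsRegular ∧ μ < ν ∧ ν < lam ∧
      ∃ S : Set α, IsCofinal S ∧ ∀ i ∈ S, f i ≤ ν := by
  have of_bound (ρ : Cardinal.{v}) (hρ : Order.succ (max ρ μ) < lam) (S : Set α)
      (hS : IsCofinal S) (hfS : ∀ i ∈ S, f i ≤ ρ) :
      ∃ ν : Cardinal.{v}, ν.IsRegular ∧ μ < ν ∧ ν < lam ∧
        ∃ S : Set α, IsCofinal S ∧ ∀ i ∈ S, f i ≤ ν :=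
    ⟨_, isRegular_succ (hμ.aleph0_le.trans (le_max_right _ _)),
      Order.lt_succ_of_le (le_max_right _ _), hρ, S, hS,
      fun i hi ↦ ((hfS i hi).trans (le_max_left _ _)).trans (Order.le_succ _)⟩
  by_cases hlim : ∃ lam₀, lam = Order.succ lam₀
  · obtain ⟨lam₀, rfl⟩ := hlim
    have hμlam₀ : μ ≤ lam₀ := Order.lt_succ_iff.1 hμlam
    have hflam₀ (i : α) : f i ≤ lam₀ := Order.lt_succ_iff.1 (hf i)
    have hcof : μ ≠ lam₀.ord.cof := fun hμ₀ ↦ h ⟨lam₀, rfl, hμ₀⟩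
    by_cases hlam₀ : lam₀.IsRegular
    · exact ⟨lam₀, hlam₀, hμlam₀.lt_of_ne (hlam₀.cof_ord ▸ hcof), Order.lt_succ _,
        Set.univ, IsCofinal.univ, fun i _ ↦ hflam₀ i⟩
    · have hμlam₀' : μ < lam₀ := hμlam₀.lt_of_ne fun h ↦ hlam₀ (h ▸ hμ)
      obtain ⟨ρ, hρ, S, hS, hfS⟩ := exists_isCofinal_forall_le_of_cof_ne
        (fun i ↦ (hflam₀ i).lt_of_ne fun h ↦ hlam₀ (h ▸ hfreg i)) (hα ▸ hcof)
      exact of_bound ρ ((Order.succ_le_of_lt (max_lt hρ hμlam₀')).trans_lt (Order.lt_succ _))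
        S hS hfS
  · obtain ⟨ρ, hρ, S, hS, hfS⟩ := exists_isCofinal_forall_le_of_cof_ne hf
      (by rw [hα, hlam.cof_ord]; exact hμlam.ne)
    exact of_bound ρ ((Order.succ_le_of_lt (max_lt hρ hμlam)).lt_of_ne fun h ↦ hlim ⟨_, h.symm⟩)
      S hS hfS

end Cardinal

namespace CategoryTheory

variable {K : Type u} [Category.{v} K]

lemma isPresentableObj_of_le {θ ν : Cardinal.{v}} (h : θ ≤ ν) {M : K}
    (hM : IsPresentableObj θ M) : IsPresentableObj ν M :=
  fun J _ hJ ↦ hM J _ fun S hS ↦ hJ S (hS.trans_le h)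

lemma isCardinalFiltered_of_isCardDirected {ν : Cardinal.{v}} [Fact ν.IsRegular]
    {J : Type v} [Preorder J] (hJ : IsCardDirected ν J) : IsCardinalFiltered J ν :=
  isCardinalFiltered_preorder J ν fun _ s hs ↦
    let ⟨b, hb⟩ := hJ (Set.range s) (mk_range_le.trans_lt hs)
    ⟨b, fun k ↦ hb _ ⟨k, rfl⟩⟩

lemma isPresentableObj_of_isColimit {I : Type v} [SmallCategory I] {D : I ⥤ K}
    {c : Cocone D} (hc : IsColimit c) {ν : Cardinal.{v}} [Fact ν.IsRegular]
    (hI : HasCardinalLT (Arrow I) ν) (hD : ∀ i, IsPresentableObj ν (D.obj i)) :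
    IsPresentableObj ν c.pt := by
  intro J _ hJ
  have := isCardinalFiltered_of_isCardDirected hJ
  have (i : Iᵒᵖ) : PreservesColimitsOfShape J ((D.op ⋙ coyoneda).obj i) :=
    (hD i.unop J _ hJ).some
  exact ⟨⟨fun {X} ↦ ⟨fun {cX} hcX ↦ ⟨Functor.Accessible.Limits.isColimitMapCocone
    (coyoneda.mapCone c.op)
    (fun Y ↦ isLimitOfPreserves ((evaluation _ _).obj Y) (isLimitOfPreserves coyoneda hc.op))
    ν (by simpa using hI) cX (fun i ↦ isColimitOfPreserves ((D.op ⋙ coyoneda).obj i) hcX)⟩⟩⟩⟩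

lemma hasCardinalLT_arrow_of_preorder {I : Type v} [Preorder I] {ν : Cardinal.{v}}
    (hν : ℵ₀ ≤ ν) (hI : #I < ν) : HasCardinalLT (Arrow I) ν :=
  (hasCardinalLT_prod' hν ((hasCardinalLT_iff_cardinal_mk_lt _ _).2 hI)
      ((hasCardinalLT_iff_cardinal_mk_lt _ _).2 hI)).of_injective
    (fun f ↦ (f.left, f.right)) fun f g h ↦ by
      obtain ⟨hl, hr⟩ := Prod.mk.inj h
      exact Arrow.ext hl hr (Subsingleton.elim _ _)

lemma isPresentableObj_of_isCofinal {α : Type v} [LinearOrder α] {D : α ⥤ K}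
    {c : Cocone D} (hc : IsColimit c) {ν : Cardinal.{v}} [hν : Fact ν.IsRegular] {S : Set α}
    (hS : IsCofinal S) (hSν : #S < ν) (hD : ∀ i ∈ S, IsPresentableObj ν (D.obj i)) :
    IsPresentableObj ν c.pt := by
  have hmono : Monotone ((↑) : S → α) := Subtype.mono_coe _
  have : hmono.functor.Final := (hmono.final_functor_iff).2 fun i ↦
    let ⟨s, hs, his⟩ := hS i
    ⟨⟨s, hs⟩, his⟩
  exact isPresentableObj_of_isColimit
    ((Functor.Final.isColimitWhiskerEquiv hmono.functor c).symm hc)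
    (hasCardinalLT_arrow_of_preorder hν.out.aleph0_le hSν) fun i ↦ hD i i.2

end CategoryTheory

/-- If `⟨M_i : i < μ⟩` is a chain (indexed by the ordinal `μ`, with `μ < λ` both regular)
of `(<λ)`-presentable objects whose colimit is not `(<λ)`-presentable, then `λ` is a
successor cardinal `λ₀⁺` and `μ = cf(λ₀)`. -/
theorem stmt18 {K : Type u} [Category.{v} K] (lam μ : Cardinal.{v})
    (hlam : lam.IsRegular) (hμ : μ.IsRegular) (hμlam : μ < lam)
    (D : μ.ord.ToType ⥤ K)
    (hpres : ∀ i, IsLtPresentableObj lam (D.obj i))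
    (c : Cocone D) (hc : IsColimit c)
    (hM : ¬ IsLtPresentableObj lam c.pt) :
    ∃ lam₀ : Cardinal.{v}, lam = Order.succ lam₀ ∧ μ = lam₀.ord.cof := by
  have hmax : max lam (aleph 1) = lam := max_eq_left <| by
    rw [← succ_aleph0]
    exact Order.succ_le_of_lt (hμ.aleph0_le.trans_lt hμlam)
  choose θ hθreg hθlt hθpres using hpres
  rw [hmax] at hθlt
  by_contra h
  obtain ⟨ν, hν, hμν, hνlam, S, hS, hθS⟩ := exists_isRegular_isCofinal_forall_le
    (by rw [Ordinal.cof_toType, hμ.cof_ord]) hμ hlam hμlam hθlt hθreg h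
  have : Fact ν.IsRegular := ⟨hν⟩
  have hSν : #S < ν := (mk_set_le S).trans_lt (by rw [mk_toType, card_ord]; exact hμν)
  exact hM ⟨ν, hν, hνlam.trans_le (le_max_left _ _), isPresentableObj_of_isCofinal hc hS hSν
    fun i hi ↦ isPresentableObj_of_le (hθS i hi) (hθpres i)⟩
end
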